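/- arXiv:2310.16508 — 5 statements merged into one kernel-verified Lean document; each statement's English description precedes it below -/
import Mathlib

section
/- Let (·,·): V × V → ℚ be a bilinear pairing on a 𝕂-vector space V satisfying (Jλ,μ) = -(λ,Jμ) for all λ,μ. Then ⟨λ,μ⟩ := (λ,μ)/2 - √(-d)·(Jλ,μ)/(2d) defines a Hermitian pairing V × V → 𝕂 whose trace Tr^𝕂_ℚ ∘ ⟨·,·⟩ equals (·,·), and also ⟨λ,μ⟩ = (λ,μ)/2 + √(-d)·(λ,Jμ)/(2d). -/
/-!
Split the sought pairing as `⟨λ,μ⟩ = p(λ,μ) + q(λ,μ)·√(-d)` with `p = B/2` and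
`q(λ,μ) = -B(Jλ,μ)/(2d)`. Skewness lets `J` cross from one slot of `B` to the other, and
`J² = -d` turns each `J`-twisted component back into the other one; these are exactly the
identities expressing 𝕂-linearity in the first and conjugate-linearity in the second variable.
-/

namespace LinearMap.BilinForm

variable {K V : Type*} [Field K] [AddCommGroup V] [Module K V]

def hermitianRe (B : LinearMap.BilinForm K V) : LinearMap.BilinForm K V := (2 : K)⁻¹ • B

def hermitianIm (J : V →ₗ[K] V) (c : K) (B : LinearMap.BilinForm K V) :
    LinearMap.BilinForm K V :=
  (-(2 * c)⁻¹) • B.compl₁₂ J LinearMap.id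

variable {J : V →ₗ[K] V} {c : K} {B : LinearMap.BilinForm K V}

theorem hermitianRe_apply (l m : V) : hermitianRe B l m = B l m / 2 := by
  simp [hermitianRe, div_eq_inv_mul]

theorem two_mul_hermitianRe_apply (h2 : (2 : K) ≠ 0) (l m : V) :
    2 * hermitianRe B l m = B l m := by
  rw [hermitianRe_apply]
  field_simp

theorem hermitianIm_apply (l m : V) : hermitianIm J c B l m = -B (J l) m / (2 * c) := by
  simp [hermitianIm, div_eq_inv_mul]

theorem hermitianIm_apply_eq_right (hskew : ∀ l m, B (J l) m = -B l (J m)) (l m : V) :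
    hermitianIm J c B l m = B l (J m) / (2 * c) := by
  rw [hermitianIm_apply, hskew, neg_neg]

theorem hermitianRe_apply_left (hc : c ≠ 0) (l m : V) :
    hermitianRe B (J l) m = -c * hermitianIm J c B l m := by
  rw [hermitianRe_apply, hermitianIm_apply]
  field_simp

theorem hermitianIm_apply_left (hc : c ≠ 0) (hJ : ∀ v, J (J v) = -c • v) (l m : V) :
    hermitianIm J c B (J l) m = hermitianRe B l m := by
  rw [hermitianIm_apply, hermitianRe_apply, hJ, map_smul, smul_apply, smul_eq_mul]
  field_simp

theorem hermitianRe_apply_right (hc : c ≠ 0) (hskew : ∀ l m, B (J l) m = -B l (J m))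
    (l m : V) : hermitianRe B l (J m) = c * hermitianIm J c B l m := by
  rw [hermitianRe_apply, hermitianIm_apply_eq_right hskew]
  field_simp

theorem hermitianIm_apply_right (hc : c ≠ 0) (hJ : ∀ v, J (J v) = -c • v)
    (hskew : ∀ l m, B (J l) m = -B l (J m)) (l m : V) :
    hermitianIm J c B l (J m) = -hermitianRe B l m := by
  rw [hermitianIm_apply_eq_right hskew, hermitianRe_apply, hJ, map_smul, smul_eq_mul]
  field_simp

end LinearMap.BilinForm

open LinearMap.BilinForm in
/-- The Hermitian pairing is encoded by its rational components `p`, `q`, with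
`⟨λ,μ⟩ = p(λ,μ) + q(λ,μ)·√(-d)`; its trace is `2p`, and the four identities with `J`
express 𝕂-linearity in the first and conjugate-linearity in the second variable. -/
theorem hermitian_from_skew_pairing
    (V : Type*) [AddCommGroup V] [Module ℚ V]
    (d : ℕ) (hd : 0 < d) (J : V →ₗ[ℚ] V)
    (hJ : J ∘ₗ J = -(d : ℚ) • LinearMap.id)
    (B : LinearMap.BilinForm ℚ V)
    (hskew : ∀ l m : V, B (J l) m = - B l (J m)) :
    ∃ p q : LinearMap.BilinForm ℚ V,
      (∀ l m : V, p l m = B l m / 2) ∧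
      (∀ l m : V, q l m = -(B (J l) m) / (2 * d)) ∧
      (∀ l m : V, q l m = B l (J m) / (2 * d)) ∧
      (∀ l m : V, p (J l) m = -(d : ℚ) * q l m) ∧
      (∀ l m : V, q (J l) m = p l m) ∧
      (∀ l m : V, p l (J m) = (d : ℚ) * q l m) ∧
      (∀ l m : V, q l (J m) = - p l m) ∧
      (∀ l m : V, B l m = 2 * p l m) := by
  have hJJ (v : V) : J (J v) = -(d : ℚ) • v := by simpa using LinearMap.congr_fun hJ v
  have hd' : (d : ℚ) ≠ 0 := by exact_mod_cast hd.ne'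
  exact ⟨hermitianRe B, hermitianIm J d B, hermitianRe_apply, hermitianIm_apply,
    hermitianIm_apply_eq_right hskew, hermitianRe_apply_left hd',
    hermitianIm_apply_left hd' hJJ, hermitianRe_apply_right hd' hskew,
    hermitianIm_apply_right hd' hJJ hskew,
    fun l m => (two_mul_hermitianRe_apply two_ne_zero l m).symm⟩
end

section
/- SU(1,1)(ℤ) = SL₂(ℤ), and U(1,1)(ℤ) = μ_𝕂 · SL₂(ℤ), where U(1,1)(ℤ) is the group of matrices A ∈ GL₂(𝒪_𝕂) with A·J₀·A* = J₀ for J₀ = [[0,-1],[1,0]], A* the conjugate transpose, and μ_𝕂 the group of roots of unity in 𝕂 viewed as scalar 2×2 matrices. -/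
/-!
For a `2 × 2` matrix and `J = !![0, -1; 1, 0]`, `A J Āᵀ = J` is equivalent to `A · adj Ā = 1`,
i.e. `Ā = conj (det A) • A`. Hence every ratio of entries of `A` is fixed by conjugation, so
rational, and `A = ξ • B` with `B` a primitive integer matrix; by Bézout `ξ` is a `ℤ`-combination
of the entries of `A`, so integral. Comparing determinants gives `N(ξ) · det B = 1` with
`N(ξ) = ξ · conj ξ` a natural number, so `N(ξ) = det B = 1`, and an integer of norm `1` in an
imaginary quadratic field is a root of unity: its trace `t` satisfies `t² ≤ 4`.
-/

open scoped Matrix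
open Module

namespace Matrix

variable {R : Type*} [CommRing R]

theorem J_mul_transpose_fin_two (B : Matrix (Fin 2) (Fin 2) R) :
    !![(0 : R), -1; 1, 0] * Bᵀ = B.adjugate * !![(0 : R), -1; 1, 0] := by
  rw [adjugate_fin_two]
  ext i j
  fin_cases i <;> fin_cases j <;> simp [mul_apply, Fin.sum_univ_two]

theorem mul_J_mul_transpose_eq_J_iff (A B : Matrix (Fin 2) (Fin 2) R) :
    A * !![(0 : R), -1; 1, 0] * Bᵀ = !![(0 : R), -1; 1, 0] ↔ A * B.adjugate = 1 := by
  have hJ : IsUnit !![(0 : R), -1; 1, 0] := by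
    rw [isUnit_iff_isUnit_det, det_fin_two_of]
    simp
  rw [mul_assoc, J_mul_transpose_fin_two, ← mul_assoc]
  conv_lhs => rhs; rw [← one_mul !![(0 : R), -1; 1, 0]]
  exact hJ.mul_left_inj

variable {F : Type*} [FunLike F R R] [RingHomClass F R R] (σ : F)

theorem map_eq_smul_of_mul_J_mul_transpose_map {A : Matrix (Fin 2) (Fin 2) R}
    (h : A * !![(0 : R), -1; 1, 0] * (A.map σ)ᵀ = !![(0 : R), -1; 1, 0]) :
    IsUnit A.det ∧ A.map σ = σ A.det • A := by
  rw [mul_J_mul_transpose_eq_J_iff] at h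
  refine ⟨isUnit_det_of_right_inverse h, ?_⟩
  calc A.map σ = A * (A.map σ).adjugate * A.map σ := by rw [h, one_mul]
    _ = σ A.det • A := by
      have hdet : (A.map σ).det = σ A.det := (RingHom.map_det (σ : R →+* R) A).symm
      rw [mul_assoc, adjugate_mul, hdet, mul_smul_one]

theorem map_smul_of_map_eq {m n : Type*} {B : Matrix m n R} (hB : B.map σ = B) (ξ : R) :
    (ξ • B).map σ = σ ξ • B := by
  conv_rhs => rw [← hB]
  ext i j
  simp

theorem smul_mul_J_mul_transpose_map {ξ : R} {B : Matrix (Fin 2) (Fin 2) R} (hξ : ξ * σ ξ = 1)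
    (hB : B.map σ = B) (hdet : B.det = 1) :
    ξ • B * !![(0 : R), -1; 1, 0] * ((ξ • B).map σ)ᵀ = !![(0 : R), -1; 1, 0] := by
  rw [mul_J_mul_transpose_eq_J_iff, map_smul_of_map_eq σ hB, adjugate_smul, smul_mul_smul_comm,
    mul_adjugate, hdet]
  simp [hξ]

end Matrix

theorem Int.exists_eq_mul_primitive {ι : Type*} [Fintype ι] {m : ι → ℤ} (hm : m ≠ 0) :
    ∃ (g : ℤ) (k l : ι → ℤ), (∀ i, m i = g * k i) ∧ ∑ i, l i * k i = 1 := by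
  set g := Submodule.IsPrincipal.generator (Ideal.span (Set.range m))
  have hspan : Ideal.span {g} = Ideal.span (Set.range m) := Ideal.span_singleton_generator _
  have hdvd : ∀ i, g ∣ m i := fun i =>
    Ideal.mem_span_singleton.mp (hspan ▸ Ideal.subset_span ⟨i, rfl⟩)
  choose k hk using hdvd
  obtain ⟨l, hl⟩ := (Submodule.mem_span_range_iff_exists_fun ℤ).mp
    (hspan ▸ Ideal.mem_span_singleton_self g)
  have hg : g ≠ 0 := by
    rintro hg
    exact hm (funext fun i => by simp [hk i, hg])
  refine ⟨g, k, l, hk, mul_left_cancel₀ hg ?_⟩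
  calc g * ∑ i, l i * k i = ∑ i, l i • m i := by
        rw [Finset.mul_sum]
        exact Finset.sum_congr rfl fun i _ => by rw [hk i, smul_eq_mul]; ring
    _ = g * 1 := by rw [hl, mul_one]

theorem Rat.exists_eq_mul_primitive {ι : Type*} [Fintype ι] {r : ι → ℚ} (hr : r ≠ 0) :
    ∃ (c : ℚ) (k l : ι → ℤ), (∀ i, r i = c * k i) ∧ ∑ i, l i * k i = 1 := by
  obtain ⟨b, hb⟩ := IsLocalization.exist_integer_multiples (nonZeroDivisors ℤ) Finset.univ r
  choose m hm using fun i => hb i (Finset.mem_univ i)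
  have hb0 : ((b : ℤ) : ℚ) ≠ 0 := by exact_mod_cast nonZeroDivisors.coe_ne_zero b
  have hm0 : m ≠ 0 := by
    intro h
    refine hr (funext fun i => ?_)
    simpa [h, hb0] using (hm i).symm
  obtain ⟨g, k, l, hgk, hkl⟩ := Int.exists_eq_mul_primitive hm0
  refine ⟨g / b, k, l, fun i => ?_, hkl⟩
  have hi := hm i
  rw [hgk i] at hi
  simp only [algebraMap_int_eq, eq_intCast, Int.cast_mul, zsmul_eq_mul] at hi
  field_simp
  linear_combination -hi

theorem mem_of_forall_mul_intCast_mem {R : Type*} [CommRing R] {S : Type*} [SetLike S R]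
    [AddSubgroupClass S R] {s : S} {ι : Type*} [Fintype ι] {ξ : R} {k l : ι → ℤ}
    (hkl : ∑ i, l i * k i = 1) (h : ∀ i, ξ * k i ∈ s) : ξ ∈ s := by
  have hξ : ξ = ∑ i, l i • (ξ * k i) := by
    calc ξ = ξ * ((∑ i, l i * k i : ℤ) : R) := by rw [hkl, Int.cast_one, mul_one]
      _ = ∑ i, l i • (ξ * k i) := by
        push_cast
        rw [Finset.mul_sum]
        exact Finset.sum_congr rfl fun i _ => by rw [zsmul_eq_mul]; ring
  rw [hξ]
  exact sum_mem fun i _ => zsmul_mem (h i) _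

theorem pow_twelve_eq_one_of_sq_eq {F : Type*} [Field F] {ξ : F} {t : ℤ} (ht : t ^ 2 ≤ 4)
    (h : ξ ^ 2 = t * ξ - 1) : ξ ^ 12 = 1 := by
  obtain ⟨ht₁, ht₂⟩ : -2 ≤ t ∧ t ≤ 2 := ⟨by nlinarith, by nlinarith⟩
  interval_cases t <;> push_cast at h
  · obtain rfl : ξ = -1 := by
      have : (ξ + 1) ^ 2 = 0 := by linear_combination h
      exact eq_neg_of_add_eq_zero_left (pow_eq_zero_iff two_ne_zero |>.mp this)
    norm_num
  · have h3 : ξ ^ 3 = 1 := by linear_combination (ξ - 1) * h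
    rw [show 12 = 3 * 4 by rfl, pow_mul, h3, one_pow]
  · rw [show 12 = 2 * 6 by rfl, pow_mul, h]
    norm_num
  · have h3 : ξ ^ 3 = -1 := by linear_combination (ξ + 1) * h
    rw [show 12 = 3 * 4 by rfl, pow_mul, h3]
    norm_num
  · obtain rfl : ξ = 1 := by
      have : (ξ - 1) ^ 2 = 0 := by linear_combination h
      exact sub_eq_zero.mp (pow_eq_zero_iff two_ne_zero |>.mp this)
    norm_num

section Conjugation

variable {K : Type*} [Field K] [Algebra ℚ K] (conj : K ≃ₐ[ℚ] K)

theorem exists_algebraMap_eq_of_conj_eq (hrank : finrank ℚ K = 2)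
    (hcne : conj ≠ AlgEquiv.refl) {z : K} (hz : conj z = z) : ∃ q : ℚ, algebraMap ℚ K q = z := by
  have := Subalgebra.isSimpleOrder_of_finrank hrank
  have hmem : z ∈ AlgHom.equalizer (conj : K →ₐ[ℚ] K) (AlgHom.id ℚ K) := hz
  rcases eq_bot_or_eq_top (AlgHom.equalizer (conj : K →ₐ[ℚ] K) (AlgHom.id ℚ K)) with h | h
  · rw [h] at hmem
    exact Algebra.mem_bot.mp hmem
  · exact absurd (AlgEquiv.ext fun x => (AlgHom.mem_equalizer _ _ x).mp (h ▸ Algebra.mem_top)) hcne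

theorem exists_intCast_eq_of_algebraMap_mem_integralClosure {q : ℚ}
    (h : algebraMap ℚ K q ∈ integralClosure ℤ K) : ∃ n : ℤ, (n : ℚ) = q := by
  rw [mem_integralClosure_iff, isIntegral_algebraMap_iff (algebraMap ℚ K).injective,
    IsIntegrallyClosed.isIntegral_iff] at h
  simpa using h

theorem conj_mem_integralClosure {x : K} (hx : x ∈ integralClosure ℤ K) :
    conj x ∈ integralClosure ℤ K :=
  hx.map conj

theorem exists_nonneg_algebraMap_eq_mul_conj
    (hpos : ∀ x : K, ∃ qn : ℚ, x * conj x = algebraMap ℚ K qn ∧ (x ≠ 0 → 0 < qn)) (x : K) :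
    ∃ q : ℚ, 0 ≤ q ∧ algebraMap ℚ K q = x * conj x := by
  obtain ⟨q, hq, hq0⟩ := hpos x
  by_cases hx : x = 0
  · exact ⟨0, le_rfl, by simp [hx]⟩
  · exact ⟨q, (hq0 hx).le, hq.symm⟩

theorem exists_natCast_eq_mul_conj
    (hnorm : ∀ x : K, ∃ q : ℚ, 0 ≤ q ∧ algebraMap ℚ K q = x * conj x)
    {x : K} (hx : x ∈ integralClosure ℤ K) : ∃ N : ℕ, x * conj x = N := by
  obtain ⟨q, hq0, hq⟩ := hnorm x
  obtain ⟨n, rfl⟩ := exists_intCast_eq_of_algebraMap_mem_integralClosure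
    (hq ▸ mul_mem hx (conj_mem_integralClosure conj hx))
  lift n to ℕ using by exact_mod_cast hq0
  exact ⟨n, by simp [← hq]⟩

theorem mul_conj_eq_one_of_pow_eq_one
    (hnorm : ∀ x : K, ∃ q : ℚ, 0 ≤ q ∧ algebraMap ℚ K q = x * conj x)
    {ξ : K} {n : ℕ} (hn : n ≠ 0) (hξ : ξ ^ n = 1) : ξ * conj ξ = 1 := by
  obtain ⟨q, hq0, hq⟩ := hnorm ξ
  have hqn : q ^ n = 1 := (algebraMap ℚ K).injective <| by
    rw [map_pow, hq, mul_pow, ← map_pow, hξ, map_one, one_mul, map_one]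
  rw [← hq, (pow_eq_one_iff_of_nonneg hq0 hn).mp hqn, map_one]

theorem pow_twelve_eq_one_of_mul_conj_eq_one (hrank : finrank ℚ K = 2)
    (hcne : conj ≠ AlgEquiv.refl) (hci : ∀ x : K, conj (conj x) = x)
    (hnorm : ∀ x : K, ∃ q : ℚ, 0 ≤ q ∧ algebraMap ℚ K q = x * conj x)
    {ξ : K} (hξ : ξ ∈ integralClosure ℤ K) (h : ξ * conj ξ = 1) : ξ ^ 12 = 1 := by
  obtain ⟨q, hq⟩ := exists_algebraMap_eq_of_conj_eq conj hrank hcne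
    (by rw [map_add, hci, add_comm] : conj (ξ + conj ξ) = ξ + conj ξ)
  obtain ⟨t, rfl⟩ := exists_intCast_eq_of_algebraMap_mem_integralClosure
    (hq ▸ add_mem hξ (conj_mem_integralClosure conj hξ))
  rw [map_intCast] at hq
  refine pow_twelve_eq_one_of_sq_eq ?_ (by linear_combination (-ξ) * hq - h)
  -- the discriminant `t² - 4` is minus the norm of `ξ - conj ξ`
  obtain ⟨d, hd0, hd⟩ := hnorm (ξ - conj ξ)
  have hdt : d = 4 - t ^ 2 := by
    apply (algebraMap ℚ K).injective
    simp only [hd, map_sub, map_pow, map_ofNat, map_intCast, hci]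
    linear_combination (t + ξ + conj ξ) * hq + 4 * h
  have : (0 : ℚ) ≤ 4 - t ^ 2 := hdt ▸ hd0
  exact_mod_cast (sub_nonneg.mp this)

theorem exists_smul_intCast_of_map_conj_eq_smul (hrank : finrank ℚ K = 2)
    (hcne : conj ≠ AlgEquiv.refl) {m n : Type*} [Fintype m] [Fintype n] {A : Matrix m n K}
    (hint : ∀ i j, A i j ∈ integralClosure ℤ K) (hA0 : A ≠ 0) {c : K} (hc : c ≠ 0)
    (hconj : A.map conj = c • A) :
    ∃ ξ ∈ integralClosure ℤ K, ∃ B : Matrix m n ℤ, A = ξ • B.map (Int.cast : ℤ → K) := by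
  obtain ⟨i₀, j₀, hA₀⟩ : ∃ i j, A i j ≠ 0 := by
    by_contra! h
    exact hA0 (Matrix.ext h)
  have hratio (p : m × n) : ∃ q : ℚ, algebraMap ℚ K q = A p.1 p.2 / A i₀ j₀ := by
    refine exists_algebraMap_eq_of_conj_eq conj hrank hcne ?_
    have hentry (i j) : conj (A i j) = c * A i j := congrFun (congrFun hconj i) j
    rw [map_div₀, hentry, hentry, mul_div_mul_left _ _ hc]
  choose r hr using hratio
  have hr0 : r ≠ 0 := fun h => by simpa [h, hA₀] using hr (i₀, j₀)
  obtain ⟨q, k, l, hrk, hkl⟩ := Rat.exists_eq_mul_primitive hr0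
  set ξ := algebraMap ℚ K q * A i₀ j₀
  have hA (i j) : A i j = ξ * k (i, j) := by
    rw [← div_mul_cancel₀ (A i j) hA₀, ← hr (i, j), hrk, map_mul, map_intCast]
    ring
  refine ⟨ξ, mem_of_forall_mul_intCast_mem hkl fun p => hA p.1 p.2 ▸ hint p.1 p.2,
    Matrix.of fun i j => k (i, j), Matrix.ext fun i j => ?_⟩
  simp [hA i j]

theorem exists_pow_eq_one_smul_of_mul_J_mul_transpose_map (hrank : finrank ℚ K = 2)
    (hcne : conj ≠ AlgEquiv.refl) (hci : ∀ x : K, conj (conj x) = x)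
    (hnorm : ∀ x : K, ∃ q : ℚ, 0 ≤ q ∧ algebraMap ℚ K q = x * conj x)
    {A : Matrix (Fin 2) (Fin 2) K} (hint : ∀ i j, A i j ∈ integralClosure ℤ K)
    (hU : A * !![(0 : K), -1; 1, 0] * (A.map conj)ᵀ = !![(0 : K), -1; 1, 0]) :
    ∃ (ξ : K) (B : Matrix (Fin 2) (Fin 2) K), ξ ^ 12 = 1 ∧
      (∀ i j, ∃ m : ℤ, B i j = m) ∧ B.det = 1 ∧ A = ξ • B := by
  obtain ⟨hδ, hconj⟩ := Matrix.map_eq_smul_of_mul_J_mul_transpose_map conj hU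
  have hA0 : A ≠ 0 := by
    rintro rfl
    simp at hδ
  obtain ⟨ξ, hξ, k, rfl⟩ := exists_smul_intCast_of_map_conj_eq_smul conj hrank hcne hint hA0
    ((map_ne_zero conj).mpr hδ.ne_zero) hconj
  set B := k.map (Int.cast : ℤ → K)
  have hB0 : B ≠ 0 := by
    rintro hB
    simp [hB] at hA0
  have hξ0 : conj ξ ≠ 0 := by
    rintro hξ
    simp [(map_eq_zero conj).mp hξ] at hA0
  have hBconj : B.map conj = B := by
    ext i j
    simp [B]
  have hdetB : B.det = k.det := ((Int.castRingHom K).map_det k).symm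
  have hconjξ : conj ξ = conj ξ ^ 2 * k.det * ξ := by
    refine smul_left_injective K hB0 ?_
    simpa [Matrix.map_smul_of_map_eq conj hBconj, Matrix.det_smul, hdetB, smul_smul] using hconj
  -- so `N(ξ) * det k = 1`, where `N(ξ) = ξ * conj ξ` is a natural number
  obtain ⟨N, hN⟩ := exists_natCast_eq_mul_conj conj hnorm hξ
  have hNk : (N : ℤ) * k.det = 1 := by
    have : conj ξ * (ξ * conj ξ * k.det) = conj ξ * 1 := by linear_combination -hconjξ
    have hK : ((N * k.det : ℤ) : K) = 1 := by
      rw [Int.cast_mul, Int.cast_natCast, ← hN]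
      exact mul_left_cancel₀ hξ0 this
    have := algebraRat.charZero K
    exact_mod_cast hK
  obtain rfl : N = 1 := by exact_mod_cast Int.eq_one_of_mul_eq_one_right N.cast_nonneg hNk
  refine ⟨ξ, B, pow_twelve_eq_one_of_mul_conj_eq_one conj hrank hcne hci hnorm hξ
    (by simpa using hN), fun i j => ⟨k i j, rfl⟩, ?_, rfl⟩
  rw [hdetB, (by simpa using hNk : k.det = 1), Int.cast_one]

theorem smul_integral_unitary_of_pow_eq_one
    (hnorm : ∀ x : K, ∃ q : ℚ, 0 ≤ q ∧ algebraMap ℚ K q = x * conj x)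
    {ξ : K} {n : ℕ} (hn : 0 < n) (hξn : ξ ^ n = 1) {B : Matrix (Fin 2) (Fin 2) K}
    (hB : ∀ i j, ∃ m : ℤ, B i j = m) (hdet : B.det = 1) :
    (∀ i j, (ξ • B) i j ∈ integralClosure ℤ K) ∧
      (∃ u ∈ integralClosure ℤ K, (ξ • B).det * u = 1) ∧
      ξ • B * !![(0 : K), -1; 1, 0] * ((ξ • B).map conj)ᵀ = !![(0 : K), -1; 1, 0] := by
  have hξ : ξ ∈ integralClosure ℤ K := IsIntegral.of_pow hn (hξn ▸ isIntegral_one)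
  refine ⟨fun i j => ?_, ⟨(ξ ^ (n - 1)) ^ 2, pow_mem (pow_mem hξ _) _, ?_⟩,
    Matrix.smul_mul_J_mul_transpose_map conj (mul_conj_eq_one_of_pow_eq_one conj hnorm hn.ne' hξn)
      ?_ hdet⟩
  · obtain ⟨m, hm⟩ := hB i j
    simpa [hm] using mul_mem hξ (intCast_mem _ m)
  · rw [Matrix.det_smul, hdet, Fintype.card_fin, mul_one, ← mul_pow, ← pow_succ',
      Nat.sub_add_cancel hn, hξn, one_pow]
  · ext i j
    obtain ⟨m, hm⟩ := hB i j
    simp [hm]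

end Conjugation

/-- Let `𝕂` be an imaginary quadratic field (an abstract field `K` of degree 2
over `ℚ` with nontrivial conjugation `conj` whose norm form `x·conj x` is a
positive-definite rational form), with ring of integers `𝒪_𝕂 = integralClosure ℤ K`.
Let `J₀ = [[0,-1],[1,0]]` and let `U(1,1)(ℤ)` consist of the `A ∈ GL₂(𝒪_𝕂)` with
`A·J₀·A* = J₀` (`A*` the conjugate transpose).  Then
`SU(1,1)(ℤ) = SL₂(ℤ)` and `U(1,1)(ℤ) = μ_𝕂 · SL₂(ℤ)`, with `μ_𝕂` the group of
roots of unity of `𝕂` viewed as scalar matrices. -/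
theorem unitary_group_integral_points
    (K : Type*) [Field K] [Algebra ℚ K]
    (hrank : Module.finrank ℚ K = 2)
    (conj : K ≃ₐ[ℚ] K) (hci : ∀ x : K, conj (conj x) = x)
    (hcne : conj ≠ (AlgEquiv.refl : K ≃ₐ[ℚ] K))
    (hpos : ∀ x : K, ∃ qn : ℚ, x * conj x = algebraMap ℚ K qn ∧ (x ≠ 0 → 0 < qn)) :
    (∀ A : Matrix (Fin 2) (Fin 2) K,
      ((∀ i j, A i j ∈ integralClosure ℤ K) ∧
        A * !![(0 : K), -1; 1, 0] * (A.map conj)ᵀ = !![(0 : K), -1; 1, 0] ∧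
        A.det = 1) ↔
      ((∀ i j, ∃ n : ℤ, A i j = (n : K)) ∧ A.det = 1)) ∧
    (∀ A : Matrix (Fin 2) (Fin 2) K,
      ((∀ i j, A i j ∈ integralClosure ℤ K) ∧
        (∃ u ∈ integralClosure ℤ K, A.det * u = 1) ∧
        A * !![(0 : K), -1; 1, 0] * (A.map conj)ᵀ = !![(0 : K), -1; 1, 0]) ↔
      (∃ (ξ : K) (B : Matrix (Fin 2) (Fin 2) K),
        (∃ n : ℕ, 0 < n ∧ ξ ^ n = 1) ∧
        (∀ i j, ∃ m : ℤ, B i j = (m : K)) ∧ B.det = 1 ∧ A = ξ • B)) := by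
  have hnorm := exists_nonneg_algebraMap_eq_mul_conj conj hpos
  refine ⟨fun A => ⟨fun ⟨hint, hU, hdet⟩ => ?_, fun ⟨hA, hdet⟩ => ?_⟩,
    fun A => ⟨fun ⟨hint, _, hU⟩ => ?_, fun ⟨ξ, B, ⟨n, hn, hξn⟩, hB, hdet, hA⟩ => ?_⟩⟩
  · obtain ⟨ξ, B, -, hB, hdetB, rfl⟩ :=
      exists_pow_eq_one_smul_of_mul_J_mul_transpose_map conj hrank hcne hci hnorm hint hU
    have hξ : ξ = 1 ∨ ξ = -1 := sq_eq_one_iff.mp (by simpa [Matrix.det_smul, hdetB] using hdet)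
    refine ⟨fun i j => ?_, hdet⟩
    obtain ⟨m, hm⟩ := hB i j
    rcases hξ with rfl | rfl
    · exact ⟨m, by simp [hm]⟩
    · exact ⟨-m, by simp [hm]⟩
  · obtain ⟨hint, -, hU⟩ :=
      smul_integral_unitary_of_pow_eq_one conj hnorm one_pos (one_pow 1) hA hdet
    rw [one_smul] at hint hU
    exact ⟨hint, hU, hdet⟩
  · obtain ⟨ξ, B, h12, hB, hdetB, hA⟩ :=
      exists_pow_eq_one_smul_of_mul_J_mul_transpose_map conj hrank hcne hci hnorm hint hU
    exact ⟨ξ, B, ⟨12, by norm_num, h12⟩, hB, hdetB, hA⟩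
  · exact hA ▸ smul_integral_unitary_of_pow_eq_one conj hnorm hn hξn hB hdet
end

section
/- Let D be a finite abelian group with a ℚ/ℤ-valued quadratic form whose associated bilinear pairing is non-degenerate, and let H, I be two subgroups of D. Then the quotients H/(H ∩ I^⊥) and I/(I ∩ H^⊥) have the same cardinality, where X^⊥ denotes the set of elements pairing trivially with X. -/
/-!
Symmetry makes `b` biadditive, so it restricts to a biadditive map `H × I → ℚ/ℤ` whose left and
right kernels are `H ∩ I^⊥` and `I ∩ H^⊥`. It therefore embeds `H/(H ∩ I^⊥)` into the character
group of `I/(I ∩ H^⊥)` and vice versa, and a finite abelian group has at most as many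
`ℚ/ℤ`-valued characters as elements (they embed into its complex characters).
-/

open AddCircle

noncomputable section

def ratCircleToRealCircle : AddCircle (1 : ℚ) →+ AddCircle (1 : ℝ) :=
  QuotientAddGroup.map _ _ (Rat.castHom ℝ).toAddMonoidHom <| by
    rintro _ ⟨n, rfl⟩
    exact ⟨n, by simp⟩

lemma ratCircleToRealCircle_coe (r : ℚ) :
    ratCircleToRealCircle (r : AddCircle (1 : ℚ)) = ((r : ℝ) : AddCircle (1 : ℝ)) :=
  rfl

lemma ratCircleToRealCircle_injective : Function.Injective ratCircleToRealCircle := by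
  refine (injective_iff_map_eq_zero _).2 fun a ha => ?_
  induction a using QuotientAddGroup.induction_on with
  | H r =>
    obtain ⟨n, hn⟩ := (coe_eq_zero_iff _).1 ((ratCircleToRealCircle_coe r).symm.trans ha)
    refine (coe_eq_zero_iff _).2 ⟨n, ?_⟩
    simp only [zsmul_eq_mul, mul_one] at hn ⊢
    exact_mod_cast hn

def toComplexAddChar {G : Type*} [AddCommGroup G] (φ : G →+ AddCircle (1 : ℚ)) :
    AddChar G ℂ where
  toFun g := (toCircle (ratCircleToRealCircle (φ g)) : ℂ)
  map_zero_eq_one' := by simp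
  map_add_eq_mul' g h := by simp [toCircle_add]

lemma toComplexAddChar_injective {G : Type*} [AddCommGroup G] :
    Function.Injective (toComplexAddChar (G := G)) := fun _ _ h =>
  AddMonoidHom.ext fun g => ratCircleToRealCircle_injective <|
    injective_toCircle one_ne_zero <| Subtype.val_injective <| DFunLike.congr_fun h g

instance finite_addMonoidHom_ratCircle {G : Type*} [AddCommGroup G] [Finite G] :
    Finite (G →+ AddCircle (1 : ℚ)) :=
  Finite.of_injective _ toComplexAddChar_injective

lemma card_addMonoidHom_ratCircle_le (G : Type*) [AddCommGroup G] [Finite G] :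
    Nat.card (G →+ AddCircle (1 : ℚ)) ≤ Nat.card G := by
  cases nonempty_fintype G
  calc Nat.card (G →+ AddCircle (1 : ℚ)) ≤ Nat.card (AddChar G ℂ) :=
        Nat.card_le_card_of_injective _ toComplexAddChar_injective
    _ = Nat.card G := by simp only [Nat.card_eq_fintype_card, AddChar.card_eq]

section Pairing

variable {A C : Type*} [AddCommGroup A] [AddCommGroup C]

def pairingToCharacters (B : A →+ C →+ AddCircle (1 : ℚ)) :
    A →+ (C ⧸ B.flip.ker) →+ AddCircle (1 : ℚ) where
  toFun a := QuotientAddGroup.lift _ (B a) fun c hc => DFunLike.congr_fun hc a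
  map_zero' := by ext; simp
  map_add' a a' := by ext c; exact DFunLike.congr_fun (map_add B a a') c

lemma ker_pairingToCharacters (B : A →+ C →+ AddCircle (1 : ℚ)) :
    (pairingToCharacters B).ker = B.ker := by
  ext a
  simp only [AddMonoidHom.mem_ker]
  constructor
  · exact fun h => AddMonoidHom.ext fun c => DFunLike.congr_fun h (c : C ⧸ B.flip.ker)
  · intro h
    ext c
    simp [pairingToCharacters, h]

lemma card_quotient_ker_le_of_pairing [Finite C] (B : A →+ C →+ AddCircle (1 : ℚ)) :
    Nat.card (A ⧸ B.ker) ≤ Nat.card (C ⧸ B.flip.ker) := by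
  rw [← ker_pairingToCharacters]
  exact (Nat.card_le_card_of_injective _ (QuotientAddGroup.kerLift_injective _)).trans
    (card_addMonoidHom_ratCircle_le _)

lemma card_quotient_ker_eq_of_pairing [Finite A] [Finite C]
    (B : A →+ C →+ AddCircle (1 : ℚ)) :
    Nat.card (A ⧸ B.ker) = Nat.card (C ⧸ B.flip.ker) :=
  (card_quotient_ker_le_of_pairing B).antisymm (card_quotient_ker_le_of_pairing B.flip)

end Pairing

section Restriction

variable {D : Type*} [AddCommGroup D]

def restrictPairing (β : D →+ D →+ AddCircle (1 : ℚ)) (H I : AddSubgroup D) :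
    H →+ I →+ AddCircle (1 : ℚ) :=
  (β.comp H.subtype).compl₂ I.subtype

lemma restrictPairing_flip (β : D →+ D →+ AddCircle (1 : ℚ)) (H I : AddSubgroup D) :
    (restrictPairing β H I).flip = restrictPairing β.flip I H :=
  rfl

lemma mem_ker_restrictPairing {β : D →+ D →+ AddCircle (1 : ℚ)} {H I : AddSubgroup D} (a : H) :
    a ∈ (restrictPairing β H I).ker ↔ ∀ x ∈ I, β a x = 0 :=
  AddMonoidHom.mem_ker.trans
    ⟨fun h x hx => DFunLike.congr_fun h ⟨x, hx⟩, fun h => AddMonoidHom.ext fun x => h x x.2⟩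

lemma card_ker_restrictPairing (β : D →+ D →+ AddCircle (1 : ℚ)) (H I : AddSubgroup D) :
    Nat.card (restrictPairing β H I).ker = Nat.card {y : D | y ∈ H ∧ ∀ x ∈ I, β y x = 0} :=
  Nat.card_congr <| (Equiv.subtypeEquivRight mem_ker_restrictPairing).trans
    (Equiv.subtypeSubtypeEquivSubtypeInter (· ∈ H) fun y => ∀ x ∈ I, β y x = 0)

end Restriction

def biadditiveOfSymm {D : Type*} [AddCommGroup D] {b : D → D → AddCircle (1 : ℚ)}
    (hadd : ∀ x y z : D, b (x + y) z = b x z + b y z) (hsymm : ∀ x y : D, b x y = b y x) :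
    D →+ D →+ AddCircle (1 : ℚ) :=
  AddMonoidHom.mk'
    (fun x => AddMonoidHom.mk' (b x) fun y z => by rw [hsymm, hadd, hsymm y, hsymm z])
    fun x y => AddMonoidHom.ext (hadd x y)

end

theorem discriminant_form_quotient_cardinalities_general
    (D : Type*) [AddCommGroup D] [Finite D]
    (b : D → D → AddCircle (1 : ℚ))
    (hadd : ∀ x y z : D, b (x + y) z = b x z + b y z)
    (hsymm : ∀ x y : D, b x y = b y x)
    (H I : AddSubgroup D) :
    Nat.card H * Nat.card {y : D | y ∈ I ∧ ∀ x ∈ H, b y x = 0} =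
      Nat.card I * Nat.card {y : D | y ∈ H ∧ ∀ x ∈ I, b y x = 0} := by
  set β := biadditiveOfSymm hadd hsymm
  have hβ : β.flip = β := AddMonoidHom.ext fun x => AddMonoidHom.ext fun y => hsymm y x
  set B := restrictPairing β H I
  have hH : Nat.card {y : D | y ∈ H ∧ ∀ x ∈ I, b y x = 0} = Nat.card B.ker :=
    (card_ker_restrictPairing β H I).symm
  have hI : Nat.card {y : D | y ∈ I ∧ ∀ x ∈ H, b y x = 0} = Nat.card B.flip.ker := by
    rw [restrictPairing_flip, hβ]
    exact (card_ker_restrictPairing β I H).symm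
  rw [hH, hI, B.ker.card_eq_card_quotient_mul_card_addSubgroup,
    B.flip.ker.card_eq_card_quotient_mul_card_addSubgroup, card_quotient_ker_eq_of_pairing B]
  ring

/-- Let `D` be a discriminant form: a finite abelian group with a `ℚ/ℤ`-valued
quadratic form `q` whose associated bilinear pairing
`b x y = q(x+y) - q x - q y` is non-degenerate.  For two subgroups `H`, `I` of
`D`, the quotients `H/(H ∩ I^⊥)` and `I/(I ∩ H^⊥)` have the same cardinality;
equivalently (all groups being finite),
`|H| · |I ∩ H^⊥| = |I| · |H ∩ I^⊥|`. -/
theorem discriminant_form_quotient_cardinalities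
    (D : Type*) [AddCommGroup D] [Finite D]
    (q : D → AddCircle (1 : ℚ))
    (b : D → D → AddCircle (1 : ℚ))
    (hbq : ∀ x y : D, b x y = q (x + y) - q x - q y)
    (hadd : ∀ x y z : D, b (x + y) z = b x z + b y z)
    (hsymm : ∀ x y : D, b x y = b y x)
    (hnd : ∀ x : D, (∀ y : D, b x y = 0) → x = 0)
    (H I : AddSubgroup D) :
    Nat.card H * Nat.card {y : D | y ∈ I ∧ ∀ x ∈ H, b y x = 0} =
      Nat.card I * Nat.card {y : D | y ∈ H ∧ ∀ x ∈ I, b y x = 0} :=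
  discriminant_form_quotient_cardinalities_general D b hadd hsymm H I
end

section
/- Let D be a discriminant form with isotropic subgroups H and I satisfying I ∩ H^⊥ = {0}. Then the map p: [H + (I^⊥ ∩ H^⊥)]/H → [(I^⊥ ∩ H^⊥) + I]/[I + (H ∩ I^⊥)] induced by the isomorphism [H + (I^⊥∩H^⊥)]/H ≅ (I^⊥∩H^⊥)/(H∩I^⊥) followed by reduction modulo the image of I is an isomorphism of groups preserving the ℚ/ℤ-quadratic values; hence it yields an embedding of the discriminant form [(I^⊥∩H^⊥)+I]/[I+(H∩I^⊥)] into H^⊥/H. -/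
/-- Let `D` be a discriminant form and `H`, `I` isotropic subgroups with
`I ∩ H^⊥ = {0}`.  The natural map
`p : [H + (I^⊥ ∩ H^⊥)]/H → [(I^⊥ ∩ H^⊥) + I]/[I + (H ∩ I^⊥)]` — induced by the
isomorphism `[H + (I^⊥∩H^⊥)]/H ≅ (I^⊥∩H^⊥)/(H∩I^⊥)` followed by reduction
modulo the image of `I` — is a group isomorphism preserving the `ℚ/ℤ`-quadratic
values, hence yields an embedding of `[(I^⊥∩H^⊥)+I]/[I+(H∩I^⊥)]` into `H^⊥/H`.
In terms of representatives `x ∈ I^⊥ ∩ H^⊥` (which represent all classes on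
both sides), this says: (1) such an `x` is trivial modulo `H` iff it is trivial
modulo `I + (H ∩ I^⊥)`; (2),(3) the quadratic form `q` is constant on
`I + (H ∩ I^⊥)`-cosets and on `H`-cosets of such representatives. -/
theorem induced_map_on_quotients_iso
    (D : Type*) [AddCommGroup D] [Finite D]
    (q : D → AddCircle (1 : ℚ))
    (b : D → D → AddCircle (1 : ℚ))
    (hbq : ∀ x y : D, b x y = q (x + y) - q x - q y)
    (hadd : ∀ x y z : D, b (x + y) z = b x z + b y z)
    (hsymm : ∀ x y : D, b x y = b y x)
    (hnd : ∀ x : D, (∀ y : D, b x y = 0) → x = 0)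
    (H I : AddSubgroup D)
    (hH : ∀ x ∈ H, q x = 0) (hI : ∀ x ∈ I, q x = 0)
    (hIH : ∀ x ∈ I, (∀ u ∈ H, b x u = 0) → x = 0) :
    (∀ z : D, (∀ u ∈ I, b z u = 0) → (∀ u ∈ H, b z u = 0) →
      (z ∈ H ↔ ∃ a ∈ I, ∃ c, (c ∈ H ∧ ∀ u ∈ I, b c u = 0) ∧ z = a + c)) ∧
    (∀ x : D, (∀ u ∈ I, b x u = 0) → (∀ u ∈ H, b x u = 0) →
      ∀ a ∈ I, ∀ c, c ∈ H → (∀ u ∈ I, b c u = 0) → q (x + (a + c)) = q x) ∧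
    (∀ x : D, (∀ u ∈ I, b x u = 0) → (∀ u ∈ H, b x u = 0) →
      ∀ h ∈ H, q (x + h) = q x) := by
  -- auxiliary facts
  have hq0 : q 0 = 0 := hH 0 H.zero_mem
  have hbH : ∀ c ∈ H, ∀ u ∈ H, b c u = 0 := by
    intro c hc u hu
    rw [hbq, hH _ (H.add_mem hc hu), hH _ hc, hH _ hu]; abel
  refine ⟨?_, ?_, ?_⟩
  · intro z hzI hzH
    constructor
    · intro hz
      exact ⟨0, I.zero_mem, z, ⟨hz, hzI⟩, by abel⟩
    · rintro ⟨a, ha, c, ⟨hcH, hcI⟩, rfl⟩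
      have haz : a = 0 := by
        refine hIH a ha ?_
        intro u hu
        have h1 := hadd a c u
        have h2 : b (a + c) u = 0 := hzH u hu
        have h3 : b c u = 0 := hbH c hcH u hu
        rw [h2, h3, add_zero] at h1
        exact h1.symm
      rw [haz, zero_add]
      exact hcH
  · intro x hxI hxH a ha c hcH hcI
    have hbx : ∀ u v : D, b u (x + v) = b u x + b u v := by
      intro u v
      rw [hsymm, hadd, hsymm x u, hsymm v u]
    have h1 : q (x + (a + c)) = b x (a + c) + q x + q (a + c) := by
      rw [hbq]; abel
    have h2 : b x (a + c) = 0 := by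
      rw [hsymm, hadd, hsymm a x, hsymm c x, hxI a ha, hxH c hcH, add_zero]
    have h3 : q (a + c) = 0 := by
      have : b a c = 0 := by rw [hsymm]; exact hcI a ha
      have := hbq a c
      rw [hI a ha, hH c hcH, ‹b a c = 0›] at this
      simpa using this.symm
    rw [h1, h2, h3]; abel
  · intro x hxI hxH h hh
    have h2 : b x h = 0 := hxH h hh
    have := hbq x h
    rw [h2, hH h hh] at this
    have h4 : q (x + h) - q x = 0 := by simpa using this.symm
    linear_combination (norm := abel) h4
end

section
/- Let D₁, D be discriminant forms, H ⊆ D₁ ⊕ D a horizontal isotropic subgroup with projections H₁ ⊆ D₁ and H_D ⊆ D, and let I ⊆ D be an isotropic subgroup. Suppose K₁ ⊆ D₁ contains H₁^⊥ and admits a lift into H^⊥ ⊆ D₁ ⊕ D (a homomorphism K₁ → H^⊥ whose composition with projection to D₁ is the identity) preserving the ℚ/ℤ-quadratic values and such that the composition with the projection to H^⊥/H is injective. Then the induced map κ: K₁/H₁^⊥ → D is injective, its image I is an isotropic subgroup satisfying I ∩ H_D = I ∩ H_D^⊥ = {0}, and K₁ = ((H ∩ I^⊥)₁)^⊥, the perpendicular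 in D₁ of the D₁-projection of H ∩ I^⊥. -/
/-!
Write `b₁ = polar q₁` and `b = polar q`. Polarizing the isotropy of `H` gives
`b₁ γ γ' + b (ι γ) (ι γ') = 0`, which together with the lift condition
`b₁ δ γ + b (κ δ) (ι γ) = 0` yields the first four claims; e.g. if `κ δ = ι γ` then
`δ - γ ∈ H₁^⊥ ⊆ K₁`, so `γ ∈ K₁` lifts to `(γ, ι γ) ∈ H` and injectivity modulo `H` forces `γ = 0`.
For the last claim, a nondegenerate pairing on a finite group is an isomorphism onto its character
group (both have the same order), so orthogonal complements are reflexive. Hence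
`K₁^⊥ ⊆ H₁^⊥⊥ = H₁`, the lift condition shows `ι y ⊥ κ(K₁)` for `y ∈ K₁^⊥`, and so the right-hand
side lies in `K₁^⊥⊥ = K₁`.
-/

open QuadraticMap

namespace AddCircle

variable {𝕜 : Type*} [Field 𝕜] {p : 𝕜}

theorem exists_zsmul_eq_of_nsmul_eq_zero [CharZero 𝕜] {n : ℕ} (hn : n ≠ 0) {a : AddCircle p}
    (ha : n • a = 0) : ∃ m : ℤ, m • ((p / n : 𝕜) : AddCircle p) = a := by
  obtain ⟨x, rfl⟩ := QuotientAddGroup.mk_surjective a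
  obtain ⟨m, hm⟩ := (coe_eq_zero_iff p).mp (by rwa [← coe_nsmul] at ha)
  refine ⟨m, ?_⟩
  rw [← coe_zsmul]
  congr 1
  rw [zsmul_eq_mul, nsmul_eq_mul] at hm
  rw [zsmul_eq_mul, mul_div_assoc', hm, mul_div_cancel_left₀ _ (Nat.cast_ne_zero.mpr hn)]

instance hasEnoughRootsOfUnity [LinearOrder 𝕜] [IsStrictOrderedRing 𝕜] [Fact (0 < p)] (n : ℕ)
    [NeZero n] : HasEnoughRootsOfUnity (Multiplicative (AddCircle p)) n := by
  set ζ := Multiplicative.ofAdd ((p / n : 𝕜) : AddCircle p)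
  have hζ : IsPrimitiveRoot ζ n := by
    simpa [ζ, orderOf_ofAdd_eq_addOrderOf, addOrderOf_period_div (Nat.pos_of_neZero n)]
      using IsPrimitiveRoot.orderOf ζ
  refine ⟨⟨ζ, hζ⟩, Subgroup.isCyclic_of_le (H' := Subgroup.zpowers (toUnits ζ)) fun u hu => ?_⟩
  have hu : n • Multiplicative.toAdd (u : Multiplicative (AddCircle p)) = 0 := by
    rw [mem_rootsOfUnity] at hu
    rw [← toAdd_pow, ← Units.val_pow_eq_pow_val, hu, Units.val_one, toAdd_one]
  obtain ⟨m, hm⟩ := exists_zsmul_eq_of_nsmul_eq_zero (NeZero.ne n) hu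
  exact ⟨m, Units.ext (Multiplicative.toAdd.injective (by simpa [ζ] using hm))⟩

end AddCircle

theorem CharacterModule.natCard_eq (A : Type*) [AddCommGroup A] [Finite A] :
    Nat.card (CharacterModule A) = Nat.card A := by
  have : NeZero (Monoid.exponent (Multiplicative A)) := ⟨Monoid.exponent_ne_zero_of_finite⟩
  have : Fact ((0 : ℚ) < 1) := ⟨one_pos⟩
  change _ = Nat.card (Multiplicative A)
  rw [← CommGroup.card_monoidHom_of_hasEnoughRootsOfUnity
    (Multiplicative A) (Multiplicative (AddCircle (1 : ℚ)))]
  exact Nat.card_congr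
    (AddMonoidHom.toMultiplicative.trans (MulEquiv.monoidHomCongrRight toUnits).toEquiv)

namespace CharacterModule

variable {A : Type*} [AddCommGroup A] [Finite A]

theorem bijective_of_injective {β : A →+ CharacterModule A} (hβ : Function.Injective β) :
    Function.Bijective β := by
  have : Finite (CharacterModule A) :=
    Nat.finite_of_card_ne_zero (by rw [natCard_eq]; exact Nat.card_pos.ne')
  exact (Nat.bijective_iff_injective_and_card β).mpr ⟨hβ, (natCard_eq A).symm⟩

theorem mem_of_forall_orthogonal {β : A →+ CharacterModule A} (hβ : Function.Injective β)
    (hsymm : ∀ x y, β x y = β y x) {P : AddSubgroup A} {x : A}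
    (hx : ∀ y, (∀ p ∈ P, β y p = 0) → β x y = 0) : x ∈ P := by
  by_contra hxP
  obtain ⟨c, hc⟩ :=
    exists_character_apply_ne_zero_of_ne_zero ((QuotientAddGroup.eq_zero_iff x).not.mpr hxP)
  obtain ⟨y, hy⟩ :=
    (bijective_of_injective hβ).surjective (AddMonoidHom.comp c (QuotientAddGroup.mk' P))
  have hyP : ∀ p ∈ P, β y p = 0 := fun p hp => by
    rw [hy]
    change c (p : A ⧸ P) = 0
    rw [(QuotientAddGroup.eq_zero_iff p).mpr hp, map_zero]
  apply hc
  rw [← hx y hyP, hsymm, hy]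
  rfl

end CharacterModule

section Polar

variable {A C : Type*} [AddCommGroup A] [AddCommGroup C]

theorem polar_add_polar_eq_zero {G B : Type*} [AddCommGroup G] [AddCommGroup B]
    (f : G →+ A) (g : G →+ B) {q₁ : A → C} {q : B → C} (h : ∀ γ, q₁ (f γ) + q (g γ) = 0)
    (γ γ' : G) : polar q₁ (f γ) (f γ') + polar q (g γ) (g γ') = 0 :=
  calc polar q₁ (f γ) (f γ') + polar q (g γ) (g γ')
      = (q₁ (f (γ + γ')) + q (g (γ + γ'))) - (q₁ (f γ) + q (g γ)) - (q₁ (f γ') + q (g γ')) := by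
        simp only [polar, map_add]; abel
    _ = 0 := by rw [h, h, h, sub_zero, sub_zero]

def polarCharacter (q : A → AddCircle (1 : ℚ))
    (hadd : ∀ x y z, polar q (x + y) z = polar q x z + polar q y z) :
    A →+ CharacterModule A :=
  AddMonoidHom.mk'
    (fun x => AddMonoidHom.mk' (polar q x) fun y z => by simp only [polar_comm q x, hadd])
    fun x y => DFunLike.ext _ _ (hadd x y)

variable {q : A → AddCircle (1 : ℚ)}

theorem mem_of_forall_polar_eq_zero [Finite A]
    (hadd : ∀ x y z, polar q (x + y) z = polar q x z + polar q y z)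
    (hnd : ∀ x, (∀ y, polar q x y = 0) → x = 0) {P : AddSubgroup A} {x : A}
    (hx : ∀ y, (∀ p ∈ P, polar q y p = 0) → polar q x y = 0) : x ∈ P :=
  CharacterModule.mem_of_forall_orthogonal (β := polarCharacter q hadd)
    ((injective_iff_map_eq_zero _).mpr fun x hx => hnd x fun y => congrArg (· y) hx)
    (polar_comm q) hx

end Polar

theorem lift_eq_zero_of_eq_iota {D₁ D C : Type*} [AddCommGroup D₁] [AddCommGroup D]
    [AddCommGroup C] {b₁ : D₁ → D₁ → C} {b : D → D → C}
    (hadd₁ : ∀ x y z : D₁, b₁ (x + y) z = b₁ x z + b₁ y z)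
    {H₁ K₁ : AddSubgroup D₁} {ι : ↥H₁ →+ D} {κ : ↥K₁ →+ D}
    (hpolar : ∀ γ γ' : ↥H₁, b₁ γ γ' + b (ι γ) (ι γ') = 0)
    (hK₁ : ∀ x : D₁, (∀ γ : ↥H₁, b₁ x (γ : D₁) = 0) → x ∈ K₁)
    (hκ0 : ∀ δ : ↥K₁, (∀ γ : ↥H₁, b₁ (δ : D₁) (γ : D₁) = 0) → κ δ = 0)
    (hlift : ∀ δ : ↥K₁, ∀ γ : ↥H₁, b₁ (δ : D₁) (γ : D₁) + b (κ δ) (ι γ) = 0)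
    (hinj : ∀ δ : ↥K₁, (∃ γ : ↥H₁, (δ : D₁) = (γ : D₁) ∧ κ δ = ι γ) → (δ : D₁) = 0)
    {δ : ↥K₁} {γ : ↥H₁} (hγ : κ δ = ι γ) : κ δ = 0 := by
  have hperp : ∀ γ' : ↥H₁, b₁ ((δ : D₁) - γ) γ' = 0 := fun γ' => by
    have hsub : b₁ ((δ : D₁) - γ) γ' = b₁ δ γ' - b₁ γ γ' := by
      rw [eq_sub_iff_add_eq, ← hadd₁, sub_add_cancel]
    have hδ := hlift δ γ'
    rw [hγ, ← hpolar γ γ', add_left_inj] at hδ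
    rw [hsub, hδ, sub_self]
  let ε : ↥K₁ := ⟨(δ : D₁) - γ, hK₁ _ hperp⟩
  let γK : ↥K₁ := δ - ε
  have hγK : (γK : D₁) = γ := sub_sub_cancel _ _
  have hκγ : κ γK = ι γ := by rw [map_sub, hκ0 ε hperp, sub_zero, hγ]
  have hγ0 : γ = 0 := Subtype.ext (hγK ▸ hinj γK ⟨γ, hγK, hκγ⟩)
  rw [hγ, hγ0, map_zero]

theorem extension_of_perp_subgroup_general
    (D₁ D : Type*) [AddCommGroup D₁] [AddCommGroup D] [Finite D₁]
    (q₁ : D₁ → AddCircle (1 : ℚ)) (q : D → AddCircle (1 : ℚ))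
    (b₁ : D₁ → D₁ → AddCircle (1 : ℚ)) (b : D → D → AddCircle (1 : ℚ))
    (hbq₁ : ∀ x y : D₁, b₁ x y = q₁ (x + y) - q₁ x - q₁ y)
    (hbq : ∀ x y : D, b x y = q (x + y) - q x - q y)
    (hadd₁ : ∀ x y z : D₁, b₁ (x + y) z = b₁ x z + b₁ y z)
    (hadd : ∀ x y z : D, b (x + y) z = b x z + b y z)
    (hnd₁ : ∀ x : D₁, (∀ y : D₁, b₁ x y = 0) → x = 0)
    (H₁ : AddSubgroup D₁) (ι : ↥H₁ →+ D)
    (hiso : ∀ γ : ↥H₁, q₁ (γ : D₁) + q (ι γ) = 0)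
    (K₁ : AddSubgroup D₁)
    (hK₁ : ∀ x : D₁, (∀ γ : ↥H₁, b₁ x (γ : D₁) = 0) → x ∈ K₁)
    (κ : ↥K₁ →+ D)
    (hκ0 : ∀ δ : ↥K₁, (∀ γ : ↥H₁, b₁ (δ : D₁) (γ : D₁) = 0) → κ δ = 0)
    (hlift : ∀ δ : ↥K₁, ∀ γ : ↥H₁, b₁ (δ : D₁) (γ : D₁) + b (κ δ) (ι γ) = 0)
    (hqpres : ∀ δ : ↥K₁, q₁ (δ : D₁) + q (κ δ) = q₁ (δ : D₁))
    (hinj : ∀ δ : ↥K₁, (∃ γ : ↥H₁, (δ : D₁) = (γ : D₁) ∧ κ δ = ι γ) → (δ : D₁) = 0) :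
    (∀ δ : ↥K₁, κ δ = 0 → (∀ γ : ↥H₁, b₁ (δ : D₁) (γ : D₁) = 0)) ∧
    (∀ δ : ↥K₁, q (κ δ) = 0) ∧
    (∀ δ : ↥K₁, (∃ γ : ↥H₁, κ δ = ι γ) → κ δ = 0) ∧
    (∀ δ : ↥K₁, (∀ γ : ↥H₁, b (κ δ) (ι γ) = 0) → κ δ = 0) ∧
    ((K₁ : Set D₁) =
      {x : D₁ | ∀ γ : ↥H₁, (∀ δ : ↥K₁, b (ι γ) (κ δ) = 0) → b₁ x (γ : D₁) = 0}) := by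
  obtain rfl : b₁ = polar q₁ := funext₂ hbq₁
  obtain rfl : b = polar q := funext₂ hbq
  have hzero (z : D) : polar q 0 z = 0 := by simpa using hadd 0 0 z
  refine ⟨fun δ hδ γ => by simpa [hδ, hzero] using hlift δ γ,
    fun δ => add_eq_left.mp (hqpres δ),
    fun δ ⟨γ, hγ⟩ => lift_eq_zero_of_eq_iota hadd₁ (polar_add_polar_eq_zero H₁.subtype ι hiso)
      hK₁ hκ0 hlift hinj hγ,
    fun δ hδ => hκ0 δ fun γ => by simpa [hδ γ] using hlift δ γ, ?_⟩
  ext x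
  refine ⟨fun hx γ hγ => ?_, fun hx => ?_⟩
  · simpa only [polar_comm q (κ _), hγ, add_zero] using hlift ⟨x, hx⟩ γ
  · refine mem_of_forall_polar_eq_zero hadd₁ hnd₁ fun y hy => ?_
    have hyH : y ∈ H₁ :=
      mem_of_forall_polar_eq_zero hadd₁ hnd₁ fun z hz => hy z (hK₁ z fun γ => hz γ γ.2)
    refine hx ⟨y, hyH⟩ fun δ => ?_
    simpa only [polar_comm q (ι _), polar_comm q₁ δ, hy δ δ.2, zero_add] using hlift δ ⟨y, hyH⟩

/-- Let `D₁ ⊕ D` be an orthogonal direct sum of discriminant forms,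
`H = {(γ, ι γ) : γ ∈ H₁}` a horizontal isotropic subgroup with projections
`H₁ ⊆ D₁` and `H_D = ι(H₁) ⊆ D`.  Suppose `K₁ ⊆ D₁` contains `H₁^⊥` and admits
a lift `δ ↦ (δ, κ δ)` into `H^⊥ ⊆ D₁ × D` (so the composition with the
projection to `D₁` is the identity), with `κ` vanishing on `H₁^⊥`, preserving
the `ℚ/ℤ`-quadratic values, and such that the composition with the projection
to `H^⊥/H` is injective.  Then the induced map `κ : K₁/H₁^⊥ → D` is injective,
its image `I` is an isotropic subgroup with `I ∩ H_D = I ∩ H_D^⊥ = {0}`, and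
`K₁ = ((H ∩ I^⊥)₁)^⊥`, the perpendicular in `D₁` of the `D₁`-projection of
`H ∩ I^⊥`. -/
theorem extension_of_perp_subgroup
    (D₁ D : Type*) [AddCommGroup D₁] [AddCommGroup D] [Finite D₁] [Finite D]
    (q₁ : D₁ → AddCircle (1 : ℚ)) (q : D → AddCircle (1 : ℚ))
    (b₁ : D₁ → D₁ → AddCircle (1 : ℚ)) (b : D → D → AddCircle (1 : ℚ))
    (hbq₁ : ∀ x y : D₁, b₁ x y = q₁ (x + y) - q₁ x - q₁ y)
    (hbq : ∀ x y : D, b x y = q (x + y) - q x - q y)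
    (hadd₁ : ∀ x y z : D₁, b₁ (x + y) z = b₁ x z + b₁ y z)
    (hadd : ∀ x y z : D, b (x + y) z = b x z + b y z)
    (hnd₁ : ∀ x : D₁, (∀ y : D₁, b₁ x y = 0) → x = 0)
    (hnd : ∀ x : D, (∀ y : D, b x y = 0) → x = 0)
    (H₁ : AddSubgroup D₁) (ι : ↥H₁ →+ D) (hι : Function.Injective ι)
    (hiso : ∀ γ : ↥H₁, q₁ (γ : D₁) + q (ι γ) = 0)
    (K₁ : AddSubgroup D₁)
    (hK₁ : ∀ x : D₁, (∀ γ : ↥H₁, b₁ x (γ : D₁) = 0) → x ∈ K₁)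
    (κ : ↥K₁ →+ D)
    (hκ0 : ∀ δ : ↥K₁, (∀ γ : ↥H₁, b₁ (δ : D₁) (γ : D₁) = 0) → κ δ = 0)
    (hlift : ∀ δ : ↥K₁, ∀ γ : ↥H₁, b₁ (δ : D₁) (γ : D₁) + b (κ δ) (ι γ) = 0)
    (hqpres : ∀ δ : ↥K₁, q₁ (δ : D₁) + q (κ δ) = q₁ (δ : D₁))
    (hinj : ∀ δ : ↥K₁, (∃ γ : ↥H₁, (δ : D₁) = (γ : D₁) ∧ κ δ = ι γ) → (δ : D₁) = 0) :
    (∀ δ : ↥K₁, κ δ = 0 → (∀ γ : ↥H₁, b₁ (δ : D₁) (γ : D₁) = 0)) ∧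
    (∀ δ : ↥K₁, q (κ δ) = 0) ∧
    (∀ δ : ↥K₁, (∃ γ : ↥H₁, κ δ = ι γ) → κ δ = 0) ∧
    (∀ δ : ↥K₁, (∀ γ : ↥H₁, b (κ δ) (ι γ) = 0) → κ δ = 0) ∧
    ((K₁ : Set D₁) =
      {x : D₁ | ∀ γ : ↥H₁, (∀ δ : ↥K₁, b (ι γ) (κ δ) = 0) → b₁ x (γ : D₁) = 0}) :=
  extension_of_perp_subgroup_general D₁ D q₁ q b₁ b hbq₁ hbq hadd₁ hadd hnd₁ H₁ ι hiso K₁ hK₁ κ hκ0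
    hlift hqpres hinj
end
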